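/- Let Ω ⊂ ℂⁿ be a bounded domain, m ≥ 1, and let d be a metric on Ω such that for some constant C₀ > 0 and all x, y ∈ Ω: g_m(x,y) − C₀ ≤ d(x,y) ≤ g_1(x,y) + C₀. Fix a base point ω ∈ Ω. Then a sequence (x_k) in Ω satisfies (x_j | x_k)_ω → ∞ as j, k → ∞ (i.e., is a Gromov sequence) if and only if (x_k) converges in the Euclidean metric to some point of ∂Ω. -/

import Mathlib

open Set Metric Filter Bornology

noncomputable section

/-- The Euclidean distance from a point to the boundary of `Ω`. -/
def bdist {n : ℕ} (Ω : Set (EuclideanSpace ℂ (Fin n))) (z : EuclideanSpace ℂ (Fin n)) : ℝ :=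
  Metric.infDist z (frontier Ω)

/-- `g_k(x,y) = 2 log((|x−y|^k + max(δ(x),δ(y)))/√(δ(x)δ(y)))`. -/
def gK {n : ℕ} (Ω : Set (EuclideanSpace ℂ (Fin n))) (k : ℝ)
    (x y : EuclideanSpace ℂ (Fin n)) : ℝ :=
  2 * Real.log ((dist x y ^ k + max (bdist Ω x) (bdist Ω y)) /
    Real.sqrt (bdist Ω x * bdist Ω y))

/-- `d` restricted to `Ω` satisfies the axioms of a metric. -/
def IsMetricOn {n : ℕ} (Ω : Set (EuclideanSpace ℂ (Fin n)))
    (d : EuclideanSpace ℂ (Fin n) → EuclideanSpace ℂ (Fin n) → ℝ) : Prop :=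
  (∀ x ∈ Ω, d x x = 0) ∧ (∀ x ∈ Ω, ∀ y ∈ Ω, x ≠ y → 0 < d x y) ∧
  (∀ x ∈ Ω, ∀ y ∈ Ω, d x y = d y x) ∧
  (∀ x ∈ Ω, ∀ y ∈ Ω, ∀ z ∈ Ω, d x z ≤ d x y + d y z)

/-- The Gromov product `(x|y)_w = (d(x,w) + d(y,w) − d(x,y))/2`. -/
def gromovProd {n : ℕ} (d : EuclideanSpace ℂ (Fin n) → EuclideanSpace ℂ (Fin n) → ℝ)
    (w x y : EuclideanSpace ℂ (Fin n)) : ℝ :=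
  (d x w + d y w - d x y) / 2

/-- Expansion of `gK` as a difference of logarithms. -/
lemma gK_eq {n : ℕ} (Ω : Set (EuclideanSpace ℂ (Fin n))) (k : ℝ)
    (x y : EuclideanSpace ℂ (Fin n)) (hx : 0 < bdist Ω x) (hy : 0 < bdist Ω y) :
    gK Ω k x y = 2 * Real.log (dist x y ^ k + max (bdist Ω x) (bdist Ω y))
      - Real.log (bdist Ω x) - Real.log (bdist Ω y) := by
  have hN : 0 < dist x y ^ k + max (bdist Ω x) (bdist Ω y) :=
    add_pos_of_nonneg_of_pos (Real.rpow_nonneg dist_nonneg k) (lt_max_iff.2 (Or.inl hx))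
  have hprod : 0 < bdist Ω x * bdist Ω y := mul_pos hx hy
  rw [gK, Real.log_div hN.ne' (Real.sqrt_pos.2 hprod).ne', Real.log_sqrt hprod.le,
    Real.log_mul hx.ne' hy.ne']
  ring

/-- characterization of Gromov sequences in the proof of Theorem 1.1.
If a metric `d` on a bounded domain `Ω ⊂ ℂⁿ` satisfies `g_m − C₀ ≤ d ≤ g_1 + C₀`, then a
sequence in `Ω` is a Gromov sequence (`(x_j|x_k)_ω → ∞` as `j, k → ∞`) if and only if it
converges in the Euclidean metric to a point of `∂Ω`. -/
theorem statement14 {n : ℕ} (Ω : Set (EuclideanSpace ℂ (Fin n)))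
    (hΩo : IsOpen Ω) (hΩc : IsConnected Ω) (hΩb : IsBounded Ω)
    (m : ℝ) (hm : 1 ≤ m)
    (d : EuclideanSpace ℂ (Fin n) → EuclideanSpace ℂ (Fin n) → ℝ)
    (hd : IsMetricOn Ω d)
    (C₀ : ℝ) (hC₀ : 0 < C₀)
    (hlow : ∀ x ∈ Ω, ∀ y ∈ Ω, gK Ω m x y - C₀ ≤ d x y)
    (hup : ∀ x ∈ Ω, ∀ y ∈ Ω, d x y ≤ gK Ω 1 x y + C₀)
    (ω : EuclideanSpace ℂ (Fin n)) (hω : ω ∈ Ω) :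
    ∀ x : ℕ → EuclideanSpace ℂ (Fin n), (∀ k, x k ∈ Ω) →
      (Tendsto (fun p : ℕ × ℕ => gromovProd d ω (x p.1) (x p.2)) (atTop ×ˢ atTop) atTop ↔
        ∃ a ∈ frontier Ω, Tendsto x atTop (nhds a)) := by
  intro x hx
  by_cases hfr : (frontier Ω).Nonempty
  swap
  · -- degenerate case: empty frontier forces a trivial space
    have hfe : frontier Ω = ∅ := not_nonempty_iff_eq_empty.mp hfr
    have hclopen : IsClopen Ω := isClopen_iff_frontier_eq_empty.mpr hfe
    have hΩuniv : Ω = univ := by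
      rcases isClopen_iff.mp hclopen with h | h
      · exact absurd (h ▸ hω) (notMem_empty ω)
      · exact h
    have hsub : Subsingleton (EuclideanSpace ℂ (Fin n)) := by
      by_contra hns
      have : Nontrivial (EuclideanSpace ℂ (Fin n)) := not_subsingleton_iff_nontrivial.mp hns
      exact NormedSpace.unbounded_univ ℂ (EuclideanSpace ℂ (Fin n)) (hΩuniv ▸ hΩb)
    constructor
    · intro hten
      exfalso
      have hzero : ∀ p : ℕ × ℕ, gromovProd d ω (x p.1) (x p.2) = 0 := by
        intro p
        have h1 : x p.1 = ω := Subsingleton.elim _ _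
        have h2 : x p.2 = ω := Subsingleton.elim _ _
        simp [gromovProd, h1, h2, hd.1 ω hω]
      have hten' : Tendsto (fun _ : ℕ × ℕ => (0 : ℝ)) (atTop ×ˢ atTop) atTop := by
        have := funext hzero
        rwa [this] at hten
      exact not_tendsto_atTop_of_tendsto_nhds tendsto_const_nhds hten'
    · rintro ⟨a, ha, -⟩
      exact absurd (hfe ▸ ha) (notMem_empty a)
  -- main case
  have hδpos : ∀ z ∈ Ω, 0 < bdist Ω z := by
    intro z hz
    refine (isClosed_frontier.notMem_iff_infDist_pos hfr).mp ?_
    rw [hΩo.frontier_eq]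
    exact fun h => h.2 hz
  -- a uniform bound E
  obtain ⟨r, hr⟩ := hΩb.subset_closedBall ω
  have hr0 : 0 ≤ r := by
    have := hr hω
    simpa using this
  set E : ℝ := 2 * r + bdist Ω ω + 1 with hE
  have hδω : 0 < bdist Ω ω := hδpos ω hω
  have hE0 : 0 < E := by positivity
  have hdistE : ∀ z ∈ Ω, ∀ w ∈ Ω, dist z w ≤ E := by
    intro z hz w hw
    have h1 : dist z ω ≤ r := by simpa [Metric.mem_closedBall] using hr hz
    have h2 : dist w ω ≤ r := by simpa [Metric.mem_closedBall] using hr hw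
    have h3 : dist z w ≤ dist z ω + dist ω w := dist_triangle z ω w
    have h4 : dist ω w = dist w ω := dist_comm ω w
    simp only [hE]
    linarith
  have hδE : ∀ z ∈ Ω, bdist Ω z ≤ E := by
    intro z hz
    have h1 : bdist Ω z ≤ bdist Ω ω + dist z ω := infDist_le_infDist_add_dist
    have h2 : dist z ω ≤ r := by simpa [Metric.mem_closedBall] using hr hz
    simp only [hE]
    linarith
  have hδωE : bdist Ω ω ≤ E := hδE ω hω
  -- four key estimates
  have key_low : ∀ z ∈ Ω,
      Real.log (bdist Ω ω) - Real.log (bdist Ω z) - C₀ ≤ d z ω := by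
    intro z hz
    have h1 := hlow z hz ω hω
    rw [gK_eq Ω m z ω (hδpos z hz) hδω] at h1
    have h2 : Real.log (bdist Ω ω) ≤
        Real.log (dist z ω ^ m + max (bdist Ω z) (bdist Ω ω)) := by
      refine Real.log_le_log hδω ?_
      have ha := Real.rpow_nonneg (dist_nonneg (x := z) (y := ω)) m
      have hb := le_max_right (bdist Ω z) (bdist Ω ω)
      linarith
    linarith
  have key_up_base : ∀ z ∈ Ω,
      d z ω ≤ 2 * Real.log (2 * E) - Real.log (bdist Ω z) - Real.log (bdist Ω ω) + C₀ := by
    intro z hz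
    have h1 := hup z hz ω hω
    rw [gK_eq Ω 1 z ω (hδpos z hz) hδω] at h1
    have hpos : 0 < dist z ω ^ (1 : ℝ) + max (bdist Ω z) (bdist Ω ω) := by
      rw [Real.rpow_one]
      exact add_pos_of_nonneg_of_pos dist_nonneg (lt_max_iff.2 (Or.inl (hδpos z hz)))
    have harg : dist z ω ^ (1 : ℝ) + max (bdist Ω z) (bdist Ω ω) ≤ 2 * E := by
      rw [Real.rpow_one]
      have h2 := hdistE z hz ω hω
      have h3 := max_le (hδE z hz) hδωE
      linarith
    have h2 := Real.log_le_log hpos harg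
    linarith
  have key_up_pair : ∀ z ∈ Ω, ∀ w ∈ Ω, d z w ≤
      2 * Real.log (dist z w + max (bdist Ω z) (bdist Ω w))
        - Real.log (bdist Ω z) - Real.log (bdist Ω w) + C₀ := by
    intro z hz w hw
    have h1 := hup z hz w hw
    rw [gK_eq Ω 1 z w (hδpos z hz) (hδpos w hw), Real.rpow_one] at h1
    linarith
  have key_low_pair : ∀ z ∈ Ω, ∀ w ∈ Ω,
      2 * Real.log (dist z w ^ m + max (bdist Ω z) (bdist Ω w))
        - Real.log (bdist Ω z) - Real.log (bdist Ω w) - C₀ ≤ d z w := by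
    intro z hz w hw
    have h1 := hlow z hz w hw
    rw [gK_eq Ω m z w (hδpos z hz) (hδpos w hw)] at h1
    linarith
  -- the two Gromov product bounds
  set t : ℕ × ℕ → ℝ :=
    fun p => dist (x p.1) (x p.2) + max (bdist Ω (x p.1)) (bdist Ω (x p.2)) with ht
  set s : ℕ × ℕ → ℝ :=
    fun p => dist (x p.1) (x p.2) ^ m + max (bdist Ω (x p.1)) (bdist Ω (x p.2)) with hs
  have htpos : ∀ p, 0 < t p := fun p =>
    add_pos_of_nonneg_of_pos dist_nonneg (lt_max_iff.2 (Or.inl (hδpos _ (hx p.1))))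
  have hspos : ∀ p, 0 < s p := fun p =>
    add_pos_of_nonneg_of_pos (Real.rpow_nonneg dist_nonneg m)
      (lt_max_iff.2 (Or.inl (hδpos _ (hx p.1))))
  have hlowP : ∀ p : ℕ × ℕ,
      2 * Real.log (bdist Ω ω) - 3 * C₀ - 2 * Real.log (t p)
        ≤ 2 * gromovProd d ω (x p.1) (x p.2) := by
    intro p
    have h1 := key_low (x p.1) (hx p.1)
    have h2 := key_low (x p.2) (hx p.2)
    have h3 := key_up_pair (x p.1) (hx p.1) (x p.2) (hx p.2)
    simp only [gromovProd, ht]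
    linarith
  have hupP : ∀ p : ℕ × ℕ,
      2 * gromovProd d ω (x p.1) (x p.2)
        ≤ 4 * Real.log (2 * E) - 2 * Real.log (bdist Ω ω) + 3 * C₀
          - 2 * Real.log (s p) := by
    intro p
    have h1 := key_up_base (x p.1) (hx p.1)
    have h2 := key_up_base (x p.2) (hx p.2)
    have h3 := key_low_pair (x p.1) (hx p.1) (x p.2) (hx p.2)
    simp only [gromovProd, hs]
    linarith
  constructor
  · -- Gromov sequence → converges to a boundary point
    intro hten
    have h2P : Tendsto (fun p : ℕ × ℕ => 2 * gromovProd d ω (x p.1) (x p.2))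
        (atTop ×ˢ atTop) atTop := hten.const_mul_atTop two_pos
    have hlogs : Tendsto (fun p => Real.log (s p)) (atTop ×ˢ atTop) atBot := by
      have hf : Tendsto (fun p : ℕ × ℕ =>
          (4 * Real.log (2 * E) - 2 * Real.log (bdist Ω ω) + 3 * C₀
            - 2 * gromovProd d ω (x p.1) (x p.2)) / 2) (atTop ×ˢ atTop) atBot := by
        apply Tendsto.atBot_div_const two_pos
        simp only [sub_eq_add_neg]
        apply tendsto_atBot_add_const_left
        exact tendsto_neg_atBot_iff.mpr h2P
      refine tendsto_atBot_mono (fun p => ?_) hf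
      have := hupP p
      linarith
    have hs0 : Tendsto s (atTop ×ˢ atTop) (nhds 0) := by
      have h := Real.tendsto_exp_atBot.comp hlogs
      have heq : (Real.exp ∘ fun p => Real.log (s p)) = s := by
        funext p
        exact Real.exp_log (hspos p)
      rwa [heq] at h
    have hdiag : Tendsto (fun k : ℕ => ((k, k) : ℕ × ℕ)) atTop (atTop ×ˢ atTop) :=
      tendsto_id.prodMk tendsto_id
    have hδ0 : Tendsto (fun k => bdist Ω (x k)) atTop (nhds 0) := by
      refine squeeze_zero (fun k => infDist_nonneg) (fun k => ?_) (hs0.comp hdiag)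
      have h1 : bdist Ω (x k) ≤ max (bdist Ω (x k)) (bdist Ω (x k)) := le_max_left _ _
      have h2 : (0 : ℝ) ≤ dist (x k) (x k) ^ m := Real.rpow_nonneg dist_nonneg m
      simp only [Function.comp, hs]
      linarith
    have hm0 : m ≠ 0 := by linarith
    have hdist0 : Tendsto (fun p : ℕ × ℕ => dist (x p.1) (x p.2))
        (atTop ×ˢ atTop) (nhds 0) := by
      have hcont : Tendsto (fun p : ℕ × ℕ => s p ^ m⁻¹) (atTop ×ˢ atTop) (nhds 0) := by
        have hca : ContinuousAt (fun y : ℝ => y ^ m⁻¹) 0 :=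
          Real.continuousAt_rpow_const 0 m⁻¹ (Or.inr (by positivity))
        have h := hca.tendsto.comp hs0
        simpa [Function.comp_def, Real.zero_rpow (inv_ne_zero hm0)] using h
      refine squeeze_zero (fun p => dist_nonneg) (fun p => ?_) hcont
      have h1 : dist (x p.1) (x p.2) ^ m ≤ s p := by
        simp only [hs]
        have hmaxnn : (0 : ℝ) ≤ max (bdist Ω (x p.1)) (bdist Ω (x p.2)) :=
          le_trans infDist_nonneg (le_max_left _ _)
        linarith
      have h2 : (dist (x p.1) (x p.2) ^ m) ^ m⁻¹ ≤ s p ^ m⁻¹ :=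
        Real.rpow_le_rpow (Real.rpow_nonneg dist_nonneg m) h1 (by positivity)
      rwa [Real.rpow_rpow_inv dist_nonneg hm0] at h2
    have hcauchy : CauchySeq x := by
      rw [cauchySeq_iff_tendsto_dist_atTop_0]
      rwa [← prod_atTop_atTop_eq]
    obtain ⟨a, ha⟩ := cauchySeq_tendsto_of_complete hcauchy
    refine ⟨a, ?_, ha⟩
    have hcont : Tendsto (fun k => bdist Ω (x k)) atTop (nhds (bdist Ω a)) :=
      ((continuous_infDist_pt (frontier Ω)).continuousAt.tendsto).comp ha
    have hza : bdist Ω a = 0 := tendsto_nhds_unique hcont hδ0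
    exact (isClosed_frontier.mem_iff_infDist_zero hfr).mpr hza
  · -- converges to a boundary point → Gromov sequence
    rintro ⟨a, hafr, hxa⟩
    have hda : Tendsto (fun p : ℕ × ℕ => dist (x p.1) (x p.2))
        (atTop ×ˢ atTop) (nhds 0) := by
      have hpair : Tendsto (fun p : ℕ × ℕ => (x p.1, x p.2)) (atTop ×ˢ atTop)
          (nhds (a, a)) := by
        rw [nhds_prod_eq]
        exact (hxa.comp tendsto_fst).prodMk (hxa.comp tendsto_snd)
      have h := (continuous_dist.tendsto (a, a)).comp hpair
      simpa [Function.comp_def] using h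
    have hδa : Tendsto (fun z : EuclideanSpace ℂ (Fin n) => bdist Ω z) (nhds a)
        (nhds 0) := by
      have h0 : bdist Ω a = 0 := infDist_zero_of_mem hafr
      have h := (continuous_infDist_pt (frontier Ω)).tendsto a
      simp only [bdist]
      rw [← h0]
      exact h
    have hmax : Tendsto (fun p : ℕ × ℕ => max (bdist Ω (x p.1)) (bdist Ω (x p.2)))
        (atTop ×ˢ atTop) (nhds 0) := by
      have h1 : Tendsto (fun p : ℕ × ℕ => bdist Ω (x p.1)) (atTop ×ˢ atTop) (nhds 0) :=
        hδa.comp (hxa.comp tendsto_fst)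
      have h2 : Tendsto (fun p : ℕ × ℕ => bdist Ω (x p.2)) (atTop ×ˢ atTop) (nhds 0) :=
        hδa.comp (hxa.comp tendsto_snd)
      simpa using h1.max h2
    have ht0 : Tendsto t (atTop ×ˢ atTop) (nhds 0) := by
      simpa using hda.add hmax
    have hlogt : Tendsto (fun p => Real.log (t p)) (atTop ×ˢ atTop) atBot := by
      apply Real.tendsto_log_nhdsGT_zero.comp
      rw [tendsto_nhdsWithin_iff]
      exact ⟨ht0, Eventually.of_forall fun p => htpos p⟩
    have h2P : Tendsto (fun p : ℕ × ℕ => 2 * gromovProd d ω (x p.1) (x p.2))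
        (atTop ×ˢ atTop) atTop := by
      refine tendsto_atTop_mono (fun p => hlowP p) ?_
      simp only [sub_eq_add_neg, ← add_assoc]
      apply tendsto_atTop_add_const_left
      have h := (tendsto_neg_atTop_iff.mpr hlogt).const_mul_atTop
        (two_pos (α := ℝ))
      simpa [mul_neg] using h
    have h := h2P.atTop_div_const two_pos
    have heq : (fun p : ℕ × ℕ => gromovProd d ω (x p.1) (x p.2))
        = fun p : ℕ × ℕ => 2 * gromovProd d ω (x p.1) (x p.2) / 2 := by
      funext p; ring
    rw [heq]
    exact h
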